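/- arXiv:2510.06613 — 2 statements merged into one kernel-verified Lean document; each statement's English description precedes it below -/
import Mathlib

section
/- Let p ≥ q > 0 with pq > 1, and let (u, v) be a positive classical solution of the Lane–Emden system −Δu = v^p, −Δv = u^q on ℝ^n. Assume that either v is bounded or p ≥ 2. Then v(x)^{p+1}/(p+1) ≤ u(x)^{q+1}/(q+1) for every x ∈ ℝ^n. -/
open MeasureTheory Real
open scoped InnerProductSpace

/-- The Laplacian of a function `f : ℝⁿ → ℝ`, as the sum of its second partial
derivatives. -/
noncomputable def lap {n : ℕ} (f : EuclideanSpace ℝ (Fin n) → ℝ)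
    (x : EuclideanSpace ℝ (Fin n)) : ℝ :=
  ∑ i : Fin n, fderiv ℝ (fun y => fderiv ℝ f y (EuclideanSpace.single i 1)) x
    (EuclideanSpace.single i 1)

/-!
Put `σ = (q + 1) / (p + 1)` and choose `c` with `σ c^(p+1) = 1`. Since `σ ≤ 1`, the map
`t ↦ c t^σ` is concave, and the two equations give `Δz ≥ σ c^(1/σ) z^m` wherever
`z = v - c u^σ` is positive, with `m = p + 1 - 1/σ > 1` because `p q > 1`.

By a Keller–Osserman argument a `C²` function on all of `ℝⁿ` with this property is nowhere
positive: comparing `z` on the ball `B(x₀, R)` with the explosive barrier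
`A (R² - |x - x₀|²)^(-2/(m-1))` through the maximum principle gives `z(x₀) ≤ C R^(-2/(m-1))`,
and `R → ∞`.
Hence `v ≤ c u^σ`, which raised to the power `p + 1` is the claim.
-/

open Filter Topology Metric

section SecondDerivative

variable {E : Type*} [NormedAddCommGroup E] [NormedSpace ℝ E] {f g : E → ℝ} {x : E}

theorem IsLocalMax.deriv_deriv_nonpos {φ : ℝ → ℝ} {t : ℝ} (h : IsLocalMax φ t)
    (hφ : ContinuousAt φ t) : deriv (deriv φ) t ≤ 0 := by
  by_contra! hpos
  -- `φ'' t > 0` would also make `t` a local minimum, so `φ` would be locally constant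
  have hmin : IsLocalMin φ t := isLocalMin_of_deriv_deriv_pos hpos h.deriv_eq_zero hφ
  have hconst : φ =ᶠ[𝓝 t] fun _ => φ t := (hmin.and h).mono fun s hs => le_antisymm hs.2 hs.1
  have hderiv : deriv φ =ᶠ[𝓝 t] fun _ => 0 :=
    hconst.eventually_nhds.mono fun s hs => by simp [Filter.EventuallyEq.deriv_eq hs]
  simp [hderiv.deriv_eq] at hpos

theorem ContDiffAt.differentiableAt_fderiv_apply (hf : ContDiffAt ℝ 2 f x) (e : E) :
    DifferentiableAt ℝ (fun y => fderiv ℝ f y e) x :=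
  ((hf.fderiv_right (m := 1) le_rfl).differentiableAt one_ne_zero).clm_apply
    (differentiableAt_const e)

theorem ContDiffAt.eventually_hasFDerivAt (hf : ContDiffAt ℝ 2 f x) :
    ∀ᶠ y in 𝓝 x, HasFDerivAt f (fderiv ℝ f y) y :=
  (hf.eventually (by simp)).mono fun _ hy =>
    (hy.differentiableAt (by norm_num)).hasFDerivAt

theorem fderiv_fderiv_apply_eq_of_eventually_hasFDerivAt {Df : E → E →L[ℝ] ℝ}
    (hDf : ∀ᶠ y in 𝓝 x, HasFDerivAt f (Df y) y) {e : E} {D2 : E →L[ℝ] ℝ}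
    (hD2 : HasFDerivAt (fun y => Df y e) D2 x) :
    fderiv ℝ (fun y => fderiv ℝ f y e) x e = D2 e := by
  have : (fun y => fderiv ℝ f y e) =ᶠ[𝓝 x] fun y => Df y e :=
    hDf.mono fun y hy => by simp only [hy.fderiv]
  rw [this.fderiv_eq, hD2.fderiv]

theorem IsLocalMax.fderiv_fderiv_apply_nonpos (h : IsLocalMax f x) (hf : ContDiffAt ℝ 2 f x)
    (e : E) : fderiv ℝ (fun y => fderiv ℝ f y e) x e ≤ 0 := by
  set line : ℝ → E := fun t => x + t • e
  have hline : ∀ t, HasDerivAt line e t := fun t => by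
    simpa [line] using ((hasDerivAt_id t).smul_const e).const_add x
  have hline0 : line 0 = x := by simp [line]
  have hline_cont : Continuous line := by fun_prop
  have hmax : IsLocalMax (f ∘ line) 0 := by
    rw [← hline0] at h
    exact h.comp_continuous hline_cont.continuousAt
  have hderiv : deriv (f ∘ line) =ᶠ[𝓝 0] (fun y => fderiv ℝ f y e) ∘ line := by
    have := hline_cont.continuousAt.preimage_mem_nhds (hline0 ▸ hf.eventually_hasFDerivAt)
    filter_upwards [this] with t ht
    exact (ht.comp_hasDerivAt t (hline t)).deriv
  have hsecond : HasDerivAt ((fun y => fderiv ℝ f y e) ∘ line)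
      (fderiv ℝ (fun y => fderiv ℝ f y e) x e) 0 := by
    have := (hf.differentiableAt_fderiv_apply e).hasFDerivAt
    rw [← hline0] at this ⊢
    exact this.comp_hasDerivAt 0 (hline 0)
  rw [← (hsecond.congr_of_eventuallyEq hderiv).deriv]
  exact hmax.deriv_deriv_nonpos ((hline0 ▸ hf.continuousAt).comp hline_cont.continuousAt)

theorem fderiv_fderiv_apply_sub (hf : ContDiffAt ℝ 2 f x) (hg : ContDiffAt ℝ 2 g x) (e : E) :
    fderiv ℝ (fun y => fderiv ℝ (fun z => f z - g z) y e) x e =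
      fderiv ℝ (fun y => fderiv ℝ f y e) x e - fderiv ℝ (fun y => fderiv ℝ g y e) x e :=
  fderiv_fderiv_apply_eq_of_eventually_hasFDerivAt
    ((hf.eventually_hasFDerivAt.and hg.eventually_hasFDerivAt).mono fun _ hy => hy.1.sub hy.2)
    ((hf.differentiableAt_fderiv_apply e).hasFDerivAt.sub
      (hg.differentiableAt_fderiv_apply e).hasFDerivAt)

theorem fderiv_fderiv_apply_comp {φ φ' : ℝ → ℝ} {φ'' : ℝ} (hf : ContDiffAt ℝ 2 f x)
    (hφ : ∀ᶠ t in 𝓝 (f x), HasDerivAt φ (φ' t) t) (hφ' : HasDerivAt φ' φ'' (f x)) (e : E) :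
    fderiv ℝ (fun y => fderiv ℝ (fun z => φ (f z)) y e) x e =
      φ' (f x) * fderiv ℝ (fun y => fderiv ℝ f y e) x e + φ'' * fderiv ℝ f x e ^ 2 := by
  have hcomp : ∀ᶠ y in 𝓝 x, HasFDerivAt (fun z => φ (f z)) (φ' (f y) • fderiv ℝ f y) y := by
    filter_upwards [hf.eventually_hasFDerivAt, hf.continuousAt.eventually hφ] with y hfy hφy
    exact hφy.comp_hasFDerivAt y hfy
  have hφ'f := hφ'.comp_hasFDerivAt x (hf.differentiableAt (by norm_num)).hasFDerivAt
  rw [fderiv_fderiv_apply_eq_of_eventually_hasFDerivAt hcomp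
    (hφ'f.mul (hf.differentiableAt_fderiv_apply e).hasFDerivAt)]
  simp only [add_apply, smul_apply, smul_eq_mul, Function.comp_apply, ContinuousLinearMap.coe_coe]
  ring

end SecondDerivative

section Laplacian

variable {n : ℕ} {f g : EuclideanSpace ℝ (Fin n) → ℝ} {x : EuclideanSpace ℝ (Fin n)}

theorem lap_nonpos_of_isLocalMax (h : IsLocalMax f x) (hf : ContDiffAt ℝ 2 f x) : lap f x ≤ 0 :=
  Finset.sum_nonpos fun _ _ => h.fderiv_fderiv_apply_nonpos hf _

theorem lap_sub (hf : ContDiffAt ℝ 2 f x) (hg : ContDiffAt ℝ 2 g x) :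
    lap (fun y => f y - g y) x = lap f x - lap g x := by
  simp only [lap, fderiv_fderiv_apply_sub hf hg, Finset.sum_sub_distrib]

theorem lap_comp {φ φ' : ℝ → ℝ} {φ'' : ℝ} (hf : ContDiffAt ℝ 2 f x)
    (hφ : ∀ᶠ t in 𝓝 (f x), HasDerivAt φ (φ' t) t) (hφ' : HasDerivAt φ' φ'' (f x)) :
    lap (fun y => φ (f y)) x =
      φ' (f x) * lap f x + φ'' * ∑ i, fderiv ℝ f x (EuclideanSpace.single i 1) ^ 2 := by
  simp only [lap, fderiv_fderiv_apply_comp hf hφ hφ', Finset.sum_add_distrib, Finset.mul_sum]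

theorem lap_const_mul_rpow (hf : ContDiffAt ℝ 2 f x) (hfx : 0 < f x) (c a : ℝ) :
    lap (fun y => c * f y ^ a) x =
      c * a * f x ^ (a - 1) * lap f x +
        c * a * (a - 1) * f x ^ (a - 2) * ∑ i, fderiv ℝ f x (EuclideanSpace.single i 1) ^ 2 := by
  refine lap_comp (φ := fun t => c * t ^ a) (φ' := fun t => c * a * t ^ (a - 1))
    (φ'' := c * a * (a - 1) * f x ^ (a - 2)) hf ?_ ?_
  · filter_upwards [eventually_gt_nhds hfx] with t ht
    simpa [mul_assoc] using (hasDerivAt_rpow_const (p := a) (Or.inl ht.ne')).const_mul c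
  · have := (hasDerivAt_rpow_const (p := a - 1) (Or.inl hfx.ne')).const_mul (c * a)
    rwa [sub_sub, one_add_one_eq_two, ← mul_assoc] at this

end Laplacian

section SquaredDistance

variable {n : ℕ}

theorem fderiv_norm_sub_sq_single (x₀ y : EuclideanSpace ℝ (Fin n)) (i : Fin n) :
    fderiv ℝ (fun z => ‖z - x₀‖ ^ 2) y (EuclideanSpace.single i 1) = 2 * (y i - x₀ i) := by
  have h : HasFDerivAt (fun z => ‖z - x₀‖ ^ 2)
      (2 • (innerSL ℝ (y - x₀)).comp (ContinuousLinearMap.id ℝ _)) y :=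
    ((hasFDerivAt_id y).sub_const x₀).norm_sq
  simp [h.fderiv, EuclideanSpace.inner_single_right]

theorem lap_norm_sub_sq (x₀ x : EuclideanSpace ℝ (Fin n)) :
    lap (fun y => ‖y - x₀‖ ^ 2) x = 2 * n := by
  have hcoord : ∀ i : Fin n, HasFDerivAt (fun y : EuclideanSpace ℝ (Fin n) => 2 * (y i - x₀ i))
      ((2 : ℝ) • (EuclideanSpace.proj i : EuclideanSpace ℝ (Fin n) →L[ℝ] ℝ)) x := fun i =>
    ((EuclideanSpace.proj (𝕜 := ℝ) i).hasFDerivAt.sub_const (x₀ i)).const_mul 2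
  simp_rw [lap, fderiv_norm_sub_sq_single, fun i => (hcoord i).fderiv]
  simp [mul_comm]

theorem sum_fderiv_norm_sub_sq_single_sq (x₀ x : EuclideanSpace ℝ (Fin n)) :
    ∑ i, fderiv ℝ (fun z => ‖z - x₀‖ ^ 2) x (EuclideanSpace.single i 1) ^ 2 =
      4 * ‖x - x₀‖ ^ 2 := by
  simp_rw [fderiv_norm_sub_sq_single, EuclideanSpace.norm_sq_eq, Finset.mul_sum]
  norm_num [mul_pow]

end SquaredDistance

section Barrier

variable {n : ℕ} {A R α : ℝ} {x₀ y : EuclideanSpace ℝ (Fin n)}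

noncomputable def barrier (A R α : ℝ) (x₀ y : EuclideanSpace ℝ (Fin n)) : ℝ :=
  A * (R ^ 2 - ‖y - x₀‖ ^ 2) ^ (-α)

theorem barrier_center : barrier A R α x₀ x₀ = A * (R ^ 2) ^ (-α) := by
  simp [barrier]

theorem sub_sq_norm_pos_of_mem_ball (hy : y ∈ ball x₀ R) : 0 < R ^ 2 - ‖y - x₀‖ ^ 2 := by
  rw [mem_ball, dist_eq_norm] at hy
  nlinarith [norm_nonneg (y - x₀)]

theorem barrier_pos (hA : 0 < A) (hy : y ∈ ball x₀ R) : 0 < barrier A R α x₀ y :=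
  mul_pos hA (rpow_pos_of_pos (sub_sq_norm_pos_of_mem_ball hy) _)

theorem contDiff_norm_sub_sq (x₀ : EuclideanSpace ℝ (Fin n)) :
    ContDiff ℝ 2 (fun z => ‖z - x₀‖ ^ 2) :=
  (contDiff_norm_sq ℝ).comp (contDiff_id.sub contDiff_const)

theorem contDiffAt_sub_sq_norm (x₀ y : EuclideanSpace ℝ (Fin n)) :
    ContDiffAt ℝ 2 (fun z => R ^ 2 - ‖z - x₀‖ ^ 2) y :=
  contDiffAt_const.sub (contDiff_norm_sub_sq x₀).contDiffAt

theorem contDiffAt_barrier (hy : y ∈ ball x₀ R) : ContDiffAt ℝ 2 (barrier A R α x₀) y :=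
  contDiffAt_const.mul
    ((contDiffAt_sub_sq_norm x₀ y).rpow_const_of_ne (sub_sq_norm_pos_of_mem_ball hy).ne')

theorem lap_barrier_le (hA : 0 ≤ A) (hα : 0 ≤ α) (hy : y ∈ ball x₀ R) :
    lap (barrier A R α x₀) y ≤
      (2 * n * α + 4 * α * (α + 1)) * R ^ 2 * A * (R ^ 2 - ‖y - x₀‖ ^ 2) ^ (-α - 2) := by
  set s := R ^ 2 - ‖y - x₀‖ ^ 2
  have hs : 0 < s := sub_sq_norm_pos_of_mem_ball hy
  have hlap : lap (fun z => R ^ 2 - ‖z - x₀‖ ^ 2) y = -(2 * n) := by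
    rw [lap_sub contDiffAt_const (contDiff_norm_sub_sq x₀).contDiffAt, lap_norm_sub_sq]
    simp [lap]
  have hgrad : ∑ i, fderiv ℝ (fun z => R ^ 2 - ‖z - x₀‖ ^ 2) y (EuclideanSpace.single i 1) ^ 2 =
      4 * ‖y - x₀‖ ^ 2 := by
    simp only [fderiv_const_sub, neg_apply, neg_sq, sum_fderiv_norm_sub_sq_single_sq]
  have hexp : s ^ (-α - 1) = s ^ (-α - 2) * s := by
    rw [← rpow_add_one hs.ne']; ring_nf
  have hlap_barrier : lap (barrier A R α x₀) y =
      A * α * s ^ (-α - 2) * (2 * n * s + 4 * (α + 1) * ‖y - x₀‖ ^ 2) := by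
    change lap (fun z => A * (R ^ 2 - ‖z - x₀‖ ^ 2) ^ (-α)) y = _
    rw [lap_const_mul_rpow (contDiffAt_sub_sq_norm x₀ y) hs, hlap, hgrad,
      show R ^ 2 - ‖y - x₀‖ ^ 2 = s from rfl, hexp]
    ring
  have hbound : 2 * n * s + 4 * (α + 1) * ‖y - x₀‖ ^ 2 ≤ 2 * n * R ^ 2 + 4 * (α + 1) * R ^ 2 := by
    have hs_le : s ≤ R ^ 2 := by simp only [s]; linarith [sq_nonneg ‖y - x₀‖]
    have hnorm_le : ‖y - x₀‖ ^ 2 ≤ R ^ 2 := by linarith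
    gcongr
  calc lap (barrier A R α x₀) y
      ≤ A * α * s ^ (-α - 2) * (2 * n * R ^ 2 + 4 * (α + 1) * R ^ 2) := by
        rw [hlap_barrier]; gcongr
    _ = _ := by ring

theorem exists_lt_barrier (hA : 0 < A) (hα : 0 < α) (hR : 0 < R) (K : ℝ) :
    ∃ r < R, ∀ y, r < dist y x₀ → dist y x₀ < R → K < barrier A R α x₀ y := by
  have hgap : Tendsto (fun d : ℝ => R ^ 2 - d ^ 2) (𝓝[<] R) (𝓝[>] 0) := by
    refine tendsto_nhdsWithin_iff.2 ⟨?_, ?_⟩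
    · have : Continuous (fun d : ℝ => R ^ 2 - d ^ 2) := by fun_prop
      simpa using (this.tendsto R).mono_left nhdsWithin_le_nhds
    · filter_upwards [Ioo_mem_nhdsLT hR] with d hd
      exact sub_pos.2 (pow_lt_pow_left₀ hd.2 hd.1.le two_ne_zero)
  have hblow : Tendsto (fun s => A * s ^ (-α)) (𝓝[>] 0) atTop :=
    (tendsto_rpow_neg_nhdsGT_zero (neg_neg_of_pos hα)).const_mul_atTop hA
  obtain ⟨r, hrR, hr⟩ :=
    mem_nhdsLT_iff_exists_Ioo_subset.1 ((hblow.comp hgap).eventually_gt_atTop K)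
  refine ⟨r, hrR, fun y hry hyR => ?_⟩
  simpa [barrier, dist_eq_norm] using hr ⟨hry, hyR⟩

theorem lap_barrier_le_rpow {c m : ℝ} (hA : 0 < A) (hα : 0 < α) (hαm : α * (m - 1) = 2)
    (hcA : c * A ^ (m - 1) = (2 * n * α + 4 * α * (α + 1)) * R ^ 2)
    (hy : y ∈ ball x₀ R) : lap (barrier A R α x₀) y ≤ c * barrier A R α x₀ y ^ m := by
  have hs := sub_sq_norm_pos_of_mem_ball hy
  have hpow : barrier A R α x₀ y ^ m = A ^ (m - 1) * A * (R ^ 2 - ‖y - x₀‖ ^ 2) ^ (-α - 2) := by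
    rw [barrier, mul_rpow hA.le (rpow_nonneg hs.le _), ← rpow_mul hs.le,
      ← rpow_add_one hA.ne', sub_add_cancel, show -α * m = -α - 2 by linarith]
  rw [hpow, ← mul_assoc, ← mul_assoc, hcA]
  exact lap_barrier_le hA.le hα.le hy

end Barrier

theorem exists_isLocalMax_ge_of_lt_on_annulus {X : Type*} [PseudoMetricSpace X] [ProperSpace X]
    {W : X → ℝ} {x₀ : X} {r R : ℝ} (hr : 0 ≤ r) (hrR : r < R)
    (hW : ContinuousOn W (closedBall x₀ r))
    (hlt : ∀ y, r < dist y x₀ → dist y x₀ < R → W y < W x₀) :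
    ∃ x₁ ∈ ball x₀ R, IsLocalMax W x₁ ∧ W x₀ ≤ W x₁ := by
  obtain ⟨x₁, hx₁, hmax⟩ := (isCompact_closedBall x₀ r).exists_isMaxOn
    ⟨x₀, mem_closedBall_self hr⟩ hW
  have hx₀ : W x₀ ≤ W x₁ := hmax (mem_closedBall_self hr)
  have hx₁R : x₁ ∈ ball x₀ R := closedBall_subset_ball hrR hx₁
  refine ⟨x₁, hx₁R, ?_, hx₀⟩
  filter_upwards [isOpen_ball.mem_nhds hx₁R] with y hy
  by_cases hyr : dist y x₀ ≤ r
  · exact hmax hyr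
  · exact ((hlt y (not_le.1 hyr) hy).trans_le hx₀).le

section KellerOsserman

variable {n : ℕ} {z V : EuclideanSpace ℝ (Fin n) → ℝ} {c m : ℝ}

theorem le_of_rpow_le_lap_of_lap_le_rpow {x₀ : EuclideanSpace ℝ (Fin n)} {R : ℝ}
    (hR : 0 < R) (hc : 0 < c) (hm : 0 < m)
    (hz : ContDiff ℝ 2 z) (hz_sub : ∀ x, 0 < z x → c * z x ^ m ≤ lap z x)
    (hV : ∀ y ∈ ball x₀ R, ContDiffAt ℝ 2 V y)
    (hV_pos : ∀ y ∈ ball x₀ R, 0 < V y)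
    (hV_super : ∀ y ∈ ball x₀ R, lap V y ≤ c * V y ^ m)
    (hV_blowup : ∀ K, ∃ r < R, ∀ y, r < dist y x₀ → dist y x₀ < R → K < V y) :
    z x₀ ≤ V x₀ := by
  by_contra! hlt
  obtain ⟨M, hM⟩ := (isCompact_closedBall x₀ R).bddAbove_image hz.continuous.continuousOn
  obtain ⟨r, hrR, hr⟩ := hV_blowup (M - (z x₀ - V x₀))
  have hcont : ContinuousOn (fun y => z y - V y) (closedBall x₀ (max r 0)) :=
    fun y hy => (hz.continuous.continuousAt.sub (hV y
      (closedBall_subset_ball (max_lt hrR hR) hy)).continuousAt).continuousWithinAt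
  obtain ⟨x₁, hx₁, hmax, hge⟩ := exists_isLocalMax_ge_of_lt_on_annulus (le_max_right r 0)
    (max_lt hrR hR) hcont fun y hry hyR => by
      have hzM : z y ≤ M := hM ⟨y, mem_closedBall.2 hyR.le, rfl⟩
      linarith [hr y ((le_max_left r 0).trans_lt hry) hyR]
  have hVz : V x₁ < z x₁ := by linarith
  have hlap := lap_nonpos_of_isLocalMax hmax (hz.contDiffAt.sub (hV x₁ hx₁))
  rw [lap_sub hz.contDiffAt (hV x₁ hx₁)] at hlap
  have hpow := mul_lt_mul_of_pos_left (rpow_lt_rpow (hV_pos x₁ hx₁).le hVz hm) hc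
  linarith [hz_sub x₁ ((hV_pos x₁ hx₁).trans hVz), hV_super x₁ hx₁]

theorem nonpos_of_rpow_le_lap (hz : ContDiff ℝ 2 z) (hc : 0 < c) (hm : 1 < m)
    (hz_sub : ∀ x, 0 < z x → c * z x ^ m ≤ lap z x) (x₀ : EuclideanSpace ℝ (Fin n)) :
    z x₀ ≤ 0 := by
  set κ := 1 / (m - 1)
  have hm1 : m - 1 ≠ 0 := (sub_pos.2 hm).ne'
  have hκ : 0 < κ := one_div_pos.2 (sub_pos.2 hm)
  set α := 2 * κ
  have hα : 0 < α := by positivity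
  have hαm : α * (m - 1) = 2 := by simp only [α, κ]; field_simp
  set C := 2 * n * α + 4 * α * (α + 1)
  have hC : 0 < C := by positivity
  have hbound : ∀ R > 0, z x₀ ≤ (C / c) ^ κ * (R ^ 2) ^ (-κ) := by
    intro R hR
    set A := (C * R ^ 2 / c) ^ κ
    have hA : 0 < A := by positivity
    have hcA : c * A ^ (m - 1) = C * R ^ 2 := by
      rw [← rpow_mul (by positivity), one_div_mul_cancel hm1, rpow_one]
      field_simp
    have := le_of_rpow_le_lap_of_lap_le_rpow (x₀ := x₀) hR hc (by linarith) hz hz_sub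
      (fun y hy => contDiffAt_barrier hy) (fun y hy => barrier_pos hA hy)
      (fun y hy => lap_barrier_le_rpow hA hα hαm hcA hy) (exists_lt_barrier hA hα hR)
    rw [barrier_center] at this
    convert this using 1
    have hA_eq : A = (C / c) ^ κ * (R ^ 2) ^ κ := by
      rw [← mul_rpow (by positivity) (by positivity), div_mul_eq_mul_div]
    rw [hA_eq, mul_assoc, ← rpow_add (by positivity)]
    simp only [α]
    ring_nf
  have hlim : Tendsto (fun R : ℝ => (C / c) ^ κ * (R ^ 2) ^ (-κ)) atTop (𝓝 0) := by
    simpa using ((tendsto_rpow_neg_atTop hκ).comp (tendsto_pow_atTop two_ne_zero)).const_mul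
      ((C / c) ^ κ)
  exact ge_of_tendsto hlim ((eventually_gt_atTop 0).mono hbound)

end KellerOsserman

section LaneEmden

variable {p q σ c : ℝ}

theorem lane_emden_source_ineq {a b : ℝ} (ha : 0 < a) (hσ : 0 < σ) (hσ1 : σ ≤ 1)
    (hσq : σ * (p + 1) = q + 1) (hc : 0 < c) (hcσ : σ * c ^ (p + 1) = 1) (hp : 1 / σ ≤ p)
    (hab : c * a ^ σ < b) :
    σ * c ^ (1 / σ) * (b - c * a ^ σ) ^ (p + 1 - 1 / σ) ≤
      c * σ * a ^ (σ - 1) * b ^ p - a ^ q := by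
  set w := c * a ^ σ
  have hw : 0 < w := by positivity
  have hb : 0 < b := hw.trans hab
  have hp1 : 1 ≤ p := le_trans (by rw [le_div_iff₀ hσ]; linarith) hp
  have hwb : b - w ≤ b := by linarith
  -- this identity is what the normalisation `σ c^(p+1) = 1` is for
  have hsource : c * σ * a ^ (σ - 1) * w ^ p = a ^ q := by
    rw [mul_rpow hc.le (by positivity), ← rpow_mul ha.le]
    calc c * σ * a ^ (σ - 1) * (c ^ p * a ^ (σ * p))
        = σ * c ^ (p + 1) * (a ^ (σ - 1) * a ^ (σ * p)) := by rw [rpow_add_one hc.ne']; ring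
      _ = a ^ q := by rw [hcσ, ← rpow_add ha, one_mul]; congr 1; linarith
  have hmean : b ^ (p - 1) * (b - w) ≤ b ^ p - w ^ p := by
    have hmono : w ^ (p - 1) * w ≤ b ^ (p - 1) * w :=
      mul_le_mul_of_nonneg_right (rpow_le_rpow hw.le hab.le (by linarith)) hw.le
    have hb1 : b ^ (p - 1) * b = b ^ p := by rw [← rpow_add_one hb.ne']; norm_num
    have hw1 : w ^ (p - 1) * w = w ^ p := by rw [← rpow_add_one hw.ne']; norm_num
    linarith
  have ha_le : (b / c) ^ (1 - 1 / σ) ≤ a ^ (σ - 1) := by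
    have h := rpow_le_rpow_of_nonpos (by positivity : 0 < a ^ σ)
      ((le_div_iff₀ hc).2 (by linarith : a ^ σ * c ≤ b))
      (div_nonpos_of_nonpos_of_nonneg (by linarith : σ - 1 ≤ 0) hσ.le)
    rwa [← rpow_mul ha.le, mul_div_cancel₀ _ hσ.ne', ← one_sub_div hσ.ne'] at h
  calc σ * c ^ (1 / σ) * (b - w) ^ (p + 1 - 1 / σ)
      = σ * c ^ (1 / σ) * (b - w) ^ (p - 1 / σ) * (b - w) := by
        rw [show p + 1 - 1 / σ = p - 1 / σ + 1 by ring, rpow_add_one (by linarith)]; ring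
    _ ≤ σ * c ^ (1 / σ) * b ^ (p - 1 / σ) * (b - w) := by
        gcongr
    _ = c * σ * (b / c) ^ (1 - 1 / σ) * (b ^ (p - 1) * (b - w)) := by
        have hc1 : c ^ (1 / σ) * c ^ (1 - 1 / σ) = c := by rw [← rpow_add hc]; norm_num
        have hb1 : b ^ (1 - 1 / σ) * b ^ (p - 1) = b ^ (p - 1 / σ) := by
          rw [← rpow_add hb]; ring_nf
        have hc2 : c * (b ^ (1 - 1 / σ) / c ^ (1 - 1 / σ)) = c ^ (1 / σ) * b ^ (1 - 1 / σ) := by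
          rw [mul_div_assoc', div_eq_iff (by positivity)]
          linear_combination -b ^ (1 - 1 / σ) * hc1
        rw [div_rpow hb.le hc.le, ← hb1]
        linear_combination -(σ * b ^ (p - 1) * (b - w)) * hc2
    _ ≤ c * σ * a ^ (σ - 1) * (b ^ p - w ^ p) := by gcongr
    _ = c * σ * a ^ (σ - 1) * b ^ p - a ^ q := by rw [← hsource]; ring

theorem rpow_le_lap_sub_of_lane_emden {n : ℕ} {u v : EuclideanSpace ℝ (Fin n) → ℝ}
    (hu : ContDiff ℝ 2 u) (hv : ContDiff ℝ 2 v) (hu0 : ∀ x, 0 < u x)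
    (hue : ∀ x, -lap u x = v x ^ p) (hve : ∀ x, -lap v x = u x ^ q)
    (hσ : 0 < σ) (hσ1 : σ ≤ 1) (hσq : σ * (p + 1) = q + 1) (hc : 0 < c)
    (hcσ : σ * c ^ (p + 1) = 1) (hp : 1 / σ ≤ p) (x : EuclideanSpace ℝ (Fin n))
    (hx : 0 < v x - c * u x ^ σ) :
    σ * c ^ (1 / σ) * (v x - c * u x ^ σ) ^ (p + 1 - 1 / σ) ≤
      lap (fun y => v y - c * u y ^ σ) x := by
  have hcu : ContDiffAt ℝ 2 (fun y => c * u y ^ σ) x :=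
    contDiffAt_const.mul (hu.contDiffAt.rpow_const_of_ne (hu0 x).ne')
  -- `σ ≤ 1` makes `y ↦ c * y ^ σ` concave, so the gradient term has the right sign
  have hgrad : c * σ * (σ - 1) * u x ^ (σ - 2) *
      ∑ i, fderiv ℝ u x (EuclideanSpace.single i 1) ^ 2 ≤ 0 :=
    mul_nonpos_of_nonpos_of_nonneg
      (mul_nonpos_of_nonpos_of_nonneg
        (mul_nonpos_of_nonneg_of_nonpos (by positivity) (by linarith))
        (rpow_nonneg (hu0 x).le _))
      (Finset.sum_nonneg fun _ _ => sq_nonneg _)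
  have hsource := lane_emden_source_ineq (hu0 x) hσ hσ1 hσq hc hcσ hp (sub_pos.1 hx)
  rw [lap_sub hv.contDiffAt hcu, lap_const_mul_rpow hu.contDiffAt (hu0 x),
    ← neg_neg (lap u x), ← neg_neg (lap v x), hue, hve]
  linarith

theorem exists_lane_emden_comparison_params (hq : 0 < q) (hqp : q ≤ p) (hpq : 1 < p * q) :
    ∃ σ c : ℝ, 0 < σ ∧ σ ≤ 1 ∧ σ * (p + 1) = q + 1 ∧ 0 < c ∧ σ * c ^ (p + 1) = 1 ∧
      1 / σ < p := by
  have hp : 0 < p + 1 := by linarith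
  refine ⟨(q + 1) / (p + 1), ((p + 1) / (q + 1)) ^ (1 / (p + 1)), by positivity,
    (div_le_one hp).2 (by linarith), div_mul_cancel₀ _ hp.ne', by positivity, ?_, ?_⟩
  · rw [← rpow_mul (by positivity), one_div_mul_cancel hp.ne', rpow_one]
    field_simp
  · rw [one_div_div, div_lt_iff₀ (by linarith)]
    linarith

theorem div_le_div_of_le_mul_rpow {a b : ℝ} (ha : 0 < a) (hb : 0 ≤ b) (hσ : 0 < σ)
    (hσq : σ * (p + 1) = q + 1) (hp : 0 < p + 1) (hc : 0 < c) (hcσ : σ * c ^ (p + 1) = 1)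
    (hab : b ≤ c * a ^ σ) :
    b ^ (p + 1) / (p + 1) ≤ a ^ (q + 1) / (q + 1) := by
  have hpow : (c * a ^ σ) ^ (p + 1) = a ^ (q + 1) / σ := by
    rw [mul_rpow hc.le (by positivity), ← rpow_mul ha.le, hσq, eq_div_iff hσ.ne', mul_comm,
      ← mul_assoc, hcσ, one_mul]
  calc b ^ (p + 1) / (p + 1) ≤ (c * a ^ σ) ^ (p + 1) / (p + 1) := by gcongr
    _ = a ^ (q + 1) / (q + 1) := by rw [hpow, ← hσq]; field_simp

end LaneEmden

theorem component_comparison_general (n : ℕ) (p q : ℝ) (hq : 0 < q) (hqp : q ≤ p)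
    (hpq : 1 < p * q)
    (u v : EuclideanSpace ℝ (Fin n) → ℝ)
    (hu : ContDiff ℝ 2 u) (hv : ContDiff ℝ 2 v)
    (hu0 : ∀ x, 0 < u x) (hv0 : ∀ x, 0 < v x)
    (hue : ∀ x, -lap u x = v x ^ p) (hve : ∀ x, -lap v x = u x ^ q) :
    ∀ x, v x ^ (p + 1) / (p + 1) ≤ u x ^ (q + 1) / (q + 1) := by
  obtain ⟨σ, c, hσ, hσ1, hσq, hc, hcσ, hp⟩ := exists_lane_emden_comparison_params hq hqp hpq
  have hz : ∀ x, v x - c * u x ^ σ ≤ 0 :=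
    nonpos_of_rpow_le_lap
      (hv.sub (contDiff_iff_contDiffAt.2 fun x =>
        contDiffAt_const.mul (hu.contDiffAt.rpow_const_of_ne (hu0 x).ne')))
      (by positivity) (by linarith)
      (rpow_le_lap_sub_of_lane_emden hu hv hu0 hue hve hσ hσ1 hσq hc hcσ hp.le)
  intro x
  exact div_le_div_of_le_mul_rpow (hu0 x) (hv0 x).le hσ hσq (by linarith) hc hcσ
    (sub_nonpos.1 (hz x))

theorem component_comparison (n : ℕ) (p q : ℝ) (hq : 0 < q) (hqp : q ≤ p)
    (hpq : 1 < p * q)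
    (u v : EuclideanSpace ℝ (Fin n) → ℝ)
    (hu : ContDiff ℝ 2 u) (hv : ContDiff ℝ 2 v)
    (hu0 : ∀ x, 0 < u x) (hv0 : ∀ x, 0 < v x)
    (hue : ∀ x, -lap u x = v x ^ p) (hve : ∀ x, -lap v x = u x ^ q)
    (hbd : (∃ M : ℝ, ∀ x, v x ≤ M) ∨ 2 ≤ p) :
    ∀ x, v x ^ (p + 1) / (p + 1) ≤ u x ^ (q + 1) / (q + 1) :=
  component_comparison_general n p q hq hqp hpq u v hu hv hu0 hv0 hue hve
end

section
/- Let p, q > 0 and let r, s ∈ ℝ with r ∉ {−1, −2}. Let (u, v) be a positive classical solution of the Lane–Emden system −Δu = v^p, −Δv = u^q on ℝ^n. Then for every φ ∈ C_c²(ℝ^n): ∫ u^r v^s |∇u|² φ − (s(s−1)/((r+1)(r+2))) ∫ u^{r+2} v^{s−2} |∇v|² φ = (1/(r+1)) ∫ u^{r+1} v^{p+s} φ − (s/((r+1)(r+2))) ∫ u^{r+q+2} v^{s−1} φ + I₂, where I₂ = −(1/(r+1)) ∫ u^{r+1} v^s (∇u·∇φ) + (s/((r+1)(r+2))) ∫ u^{r+2}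 v^{s−1} (∇v·∇φ), all integrals being over ℝ^n. -/
/-!
Test the first equation against `u ^ (r + 1) * v ^ s * φ` and the second against
`u ^ (r + 2) * v ^ (s - 1) * φ`. After Green's identity `∫ ⟪∇w, ∇F⟫ = ∫ (-Δw) F` and the product
rule for `∇F`, each test yields a linear relation between the integrals of the statement and the
mixed integral `∫ u ^ (r + 1) * v ^ (s - 1) * ⟪∇u, ∇v⟫ * φ`. Eliminating the mixed integral
(`r + 2` times the first relation minus `s` times the second) and dividing by `(r + 1) * (r + 2)`
gives the identity.
-/

open MeasureTheory Real
open scoped InnerProductSpace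

section Gradient

variable {𝕜 F : Type*} [RCLike 𝕜] [NormedAddCommGroup F] [InnerProductSpace 𝕜 F]
  [CompleteSpace F] {f : F → 𝕜}

theorem ContDiff.continuous_gradient (hf : ContDiff 𝕜 1 f) : Continuous (gradient f) :=
  (InnerProductSpace.toDual 𝕜 F).symm.continuous.comp (hf.continuous_fderiv one_ne_zero)

theorem HasCompactSupport.gradient (hf : HasCompactSupport f) :
    HasCompactSupport (gradient f) :=
  (hf.fderiv 𝕜).comp_left (g := (InnerProductSpace.toDual 𝕜 F).symm) (map_zero _)

end Gradient

section IntegrationByParts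

variable {E : Type*} [NormedAddCommGroup E] [NormedSpace ℝ E] [FiniteDimensional ℝ E]
  [MeasurableSpace E] [BorelSpace E] {μ : Measure E} [μ.IsAddHaarMeasure]

theorem integral_fderiv_mul_fderiv_eq_neg_integral_fderiv_fderiv_mul {w F : E → ℝ}
    (hw : ContDiff ℝ 2 w) (hF : ContDiff ℝ 1 F) (hFc : HasCompactSupport F) (y : E) :
    ∫ x, fderiv ℝ w x y * fderiv ℝ F x y ∂μ
      = -∫ x, fderiv ℝ (fun z => fderiv ℝ w z y) x y * F x ∂μ := by
  have hwy : ContDiff ℝ 1 fun z => fderiv ℝ w z y :=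
    (hw.fderiv_right (m := 1) le_rfl).clm_apply contDiff_const
  refine integral_mul_fderiv_eq_neg_fderiv_mul_of_integrable ?_ ?_ ?_
    (fun x _ => hwy.differentiable one_ne_zero x) (fun x _ => hF.differentiable one_ne_zero x)
  · exact (((hwy.continuous_fderiv one_ne_zero).clm_apply continuous_const).mul
      hF.continuous).integrable_of_hasCompactSupport hFc.mul_left
  · exact (hwy.continuous.mul ((hF.continuous_fderiv one_ne_zero).clm_apply
      continuous_const)).integrable_of_hasCompactSupport (hFc.fderiv_apply ℝ y).mul_left
  · exact (hwy.continuous.mul hF.continuous).integrable_of_hasCompactSupport hFc.mul_left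

end IntegrationByParts

section Euclidean

variable {n : ℕ}

theorem inner_gradient_eq_sum_fderiv_mul_fderiv (f g : EuclideanSpace ℝ (Fin n) → ℝ)
    (x : EuclideanSpace ℝ (Fin n)) :
    ⟪gradient f x, gradient g x⟫_ℝ
      = ∑ i, fderiv ℝ f x (EuclideanSpace.single i 1)
          * fderiv ℝ g x (EuclideanSpace.single i 1) := by
  rw [← (EuclideanSpace.basisFun (Fin n) ℝ).sum_inner_mul_inner]
  simp only [EuclideanSpace.basisFun_apply, inner_gradient_left, real_inner_comm (gradient g x)]

theorem integral_inner_gradient_eq_integral_neg_lap_mul {w F : EuclideanSpace ℝ (Fin n) → ℝ}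
    (hw : ContDiff ℝ 2 w) (hF : ContDiff ℝ 1 F) (hFc : HasCompactSupport F) :
    ∫ x, ⟪gradient w x, gradient F x⟫_ℝ = ∫ x, -lap w x * F x := by
  let e : Fin n → EuclideanSpace ℝ (Fin n) := fun i => EuclideanSpace.single i 1
  have hint : ∀ i, Integrable fun x => fderiv ℝ (fun z => fderiv ℝ w z (e i)) x (e i) * F x := by
    intro i
    have hwi : ContDiff ℝ 1 fun z => fderiv ℝ w z (e i) :=
      (hw.fderiv_right (m := 1) le_rfl).clm_apply contDiff_const
    exact (((hwi.continuous_fderiv one_ne_zero).clm_apply continuous_const).mul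
      hF.continuous).integrable_of_hasCompactSupport hFc.mul_left
  calc ∫ x, ⟪gradient w x, gradient F x⟫_ℝ
      = ∑ i, ∫ x, fderiv ℝ w x (e i) * fderiv ℝ F x (e i) := by
        simp only [inner_gradient_eq_sum_fderiv_mul_fderiv]
        refine integral_finsetSum _ fun i _ => ?_
        exact (((hw.continuous_fderiv two_ne_zero).clm_apply continuous_const).mul
          ((hF.continuous_fderiv one_ne_zero).clm_apply continuous_const))
          |>.integrable_of_hasCompactSupport (hFc.fderiv_apply ℝ (e i)).mul_left
    _ = ∑ i, ∫ x, -(fderiv ℝ (fun z => fderiv ℝ w z (e i)) x (e i) * F x) := by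
        simp only [integral_neg,
          integral_fderiv_mul_fderiv_eq_neg_integral_fderiv_fderiv_mul hw hF hFc]
    _ = ∫ x, -lap w x * F x := by
        rw [← integral_finsetSum _ fun i _ => (hint i).fun_neg]
        simp only [lap, Finset.sum_mul, Finset.sum_neg_distrib, neg_mul, e]

theorem fderiv_rpow_mul_rpow_mul_apply {E : Type*} [NormedAddCommGroup E] [NormedSpace ℝ E]
    {u v φ : E → ℝ} {x : E} (hu : DifferentiableAt ℝ u x) (hv : DifferentiableAt ℝ v x)
    (hφ : DifferentiableAt ℝ φ x) (hu0 : u x ≠ 0) (hv0 : v x ≠ 0) (a b : ℝ) (y : E) :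
    fderiv ℝ (fun z => u z ^ a * v z ^ b * φ z) x y
      = a * u x ^ (a - 1) * v x ^ b * φ x * fderiv ℝ u x y
        + b * u x ^ a * v x ^ (b - 1) * φ x * fderiv ℝ v x y
        + u x ^ a * v x ^ b * fderiv ℝ φ x y := by
  have h : HasFDerivAt (fun z => u z ^ a * v z ^ b * φ z) _ x :=
    ((hu.hasFDerivAt.rpow_const (.inl hu0)).mul (hv.hasFDerivAt.rpow_const (.inl hv0))).mul
      hφ.hasFDerivAt
  rw [h.fderiv]
  simp only [Pi.mul_apply, add_apply, smul_apply, smul_eq_mul]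
  ring

theorem integral_neg_lap_mul_rpow_mul_rpow_mul {u v φ w : EuclideanSpace ℝ (Fin n) → ℝ}
    (hu : ContDiff ℝ 1 u) (hv : ContDiff ℝ 1 v) (hu0 : ∀ x, u x ≠ 0) (hv0 : ∀ x, v x ≠ 0)
    (hφ : ContDiff ℝ 1 φ) (hφc : HasCompactSupport φ) (hw : ContDiff ℝ 2 w) (a b : ℝ) :
    ∫ x, -lap w x * (u x ^ a * v x ^ b * φ x)
      = a * (∫ x, u x ^ (a - 1) * v x ^ b * ⟪gradient w x, gradient u x⟫_ℝ * φ x)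
        + b * (∫ x, u x ^ a * v x ^ (b - 1) * ⟪gradient w x, gradient v x⟫_ℝ * φ x)
        + ∫ x, u x ^ a * v x ^ b * ⟪gradient w x, gradient φ x⟫_ℝ := by
  have hF : ContDiff ℝ 1 fun x => u x ^ a * v x ^ b * φ x :=
    ((hu.rpow_const_of_ne hu0).mul (hv.rpow_const_of_ne hv0)).mul hφ
  have hpow : ∀ {f : EuclideanSpace ℝ (Fin n) → ℝ}, ContDiff ℝ 1 f → (∀ x, f x ≠ 0) →
      ∀ c : ℝ, Continuous fun x => f x ^ c :=
    fun hf hf0 c => hf.continuous.rpow_const fun x => .inl (hf0 x)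
  have hgw := (hw.of_le one_le_two).continuous_gradient
  have hI₁ : Integrable fun x => u x ^ (a - 1) * v x ^ b * ⟪gradient w x, gradient u x⟫_ℝ * φ x :=
    (((hpow hu hu0 _).mul (hpow hv hv0 _)).mul (hgw.inner hu.continuous_gradient)).mul
      hφ.continuous |>.integrable_of_hasCompactSupport hφc.mul_left
  have hI₂ : Integrable fun x => u x ^ a * v x ^ (b - 1) * ⟪gradient w x, gradient v x⟫_ℝ * φ x :=
    (((hpow hu hu0 _).mul (hpow hv hv0 _)).mul (hgw.inner hv.continuous_gradient)).mul
      hφ.continuous |>.integrable_of_hasCompactSupport hφc.mul_left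
  have hI₃ : Integrable fun x => u x ^ a * v x ^ b * ⟪gradient w x, gradient φ x⟫_ℝ :=
    ((hpow hu hu0 _).mul (hpow hv hv0 _)).mul (hgw.inner hφ.continuous_gradient)
      |>.integrable_of_hasCompactSupport <| hφc.gradient.mono fun x hx h0 =>
        hx (by simp only [Pi.mul_apply, h0, inner_zero_right, mul_zero])
  calc ∫ x, -lap w x * (u x ^ a * v x ^ b * φ x)
      = ∫ x, ⟪gradient w x, gradient (fun y => u y ^ a * v y ^ b * φ y) x⟫_ℝ :=
        (integral_inner_gradient_eq_integral_neg_lap_mul hw hF hφc.mul_left).symm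
    _ = ∫ x, (a * (u x ^ (a - 1) * v x ^ b * ⟪gradient w x, gradient u x⟫_ℝ * φ x)
          + b * (u x ^ a * v x ^ (b - 1) * ⟪gradient w x, gradient v x⟫_ℝ * φ x)
          + u x ^ a * v x ^ b * ⟪gradient w x, gradient φ x⟫_ℝ) := by
        congr 1
        ext x
        simp only [inner_gradient_right, conj_trivial, fderiv_rpow_mul_rpow_mul_apply
          (hu.differentiable one_ne_zero x) (hv.differentiable one_ne_zero x)
          (hφ.differentiable one_ne_zero x) (hu0 x) (hv0 x)]
        ring
    _ = _ := by
        rw [integral_add ((hI₁.const_mul a).fun_add (hI₂.const_mul b)) hI₃,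
          integral_add (hI₁.const_mul a) (hI₂.const_mul b), integral_const_mul, integral_const_mul]

end Euclidean

theorem estimates_transform_general (n : ℕ) (p q r s : ℝ)
    (hr1 : r ≠ -1) (hr2 : r ≠ -2)
    (u v : EuclideanSpace ℝ (Fin n) → ℝ)
    (hu : ContDiff ℝ 2 u) (hv : ContDiff ℝ 2 v)
    (hu0 : ∀ x, 0 < u x) (hv0 : ∀ x, 0 < v x)
    (hue : ∀ x, -lap u x = v x ^ p) (hve : ∀ x, -lap v x = u x ^ q)
    (φ : EuclideanSpace ℝ (Fin n) → ℝ) (hφ : ContDiff ℝ 2 φ)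
    (hφc : HasCompactSupport φ) :
    (∫ x, u x ^ r * v x ^ s * ‖gradient u x‖ ^ 2 * φ x)
      - s * (s - 1) / ((r + 1) * (r + 2)) *
        (∫ x, u x ^ (r + 2) * v x ^ (s - 2) * ‖gradient v x‖ ^ 2 * φ x)
    = (1 / (r + 1)) * (∫ x, u x ^ (r + 1) * v x ^ (p + s) * φ x)
      - s / ((r + 1) * (r + 2)) * (∫ x, u x ^ (r + q + 2) * v x ^ (s - 1) * φ x)
      + (-(1 / (r + 1)) *
          (∫ x, u x ^ (r + 1) * v x ^ s * ⟪gradient u x, gradient φ x⟫_ℝ)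
        + s / ((r + 1) * (r + 2)) *
          (∫ x, u x ^ (r + 2) * v x ^ (s - 1) *
            ⟪gradient v x, gradient φ x⟫_ℝ)) := by
  have hu1 := hu.of_le one_le_two
  have hv1 := hv.of_le one_le_two
  have hu_ne : ∀ x, u x ≠ 0 := fun x => (hu0 x).ne'
  have hv_ne : ∀ x, v x ≠ 0 := fun x => (hv0 x).ne'
  have hA := integral_neg_lap_mul_rpow_mul_rpow_mul hu1 hv1 hu_ne hv_ne (hφ.of_le one_le_two) hφc
    hu (r + 1) s
  have hB := integral_neg_lap_mul_rpow_mul_rpow_mul hu1 hv1 hu_ne hv_ne (hφ.of_le one_le_two) hφc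
    hv (r + 2) (s - 1)
  rw [show r + 2 - 1 = r + 1 by ring, show s - 1 - 1 = s - 2 by ring] at hB
  simp only [hue, hve, add_sub_cancel_right, real_inner_self_eq_norm_sq,
    real_inner_comm (gradient u _) (gradient v _)] at hA hB
  have hP₁ : ∫ x, v x ^ p * (u x ^ (r + 1) * v x ^ s * φ x)
      = ∫ x, u x ^ (r + 1) * v x ^ (p + s) * φ x := by
    congr 1; ext x; rw [rpow_add (hv0 x)]; ring
  have hP₂ : ∫ x, u x ^ q * (u x ^ (r + 2) * v x ^ (s - 1) * φ x)
      = ∫ x, u x ^ (r + q + 2) * v x ^ (s - 1) * φ x := by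
    congr 1; ext x; rw [show r + q + 2 = q + (r + 2) by ring, rpow_add (hu0 x) q]; ring
  rw [hP₁] at hA
  rw [hP₂] at hB
  have hr1' : r + 1 ≠ 0 := fun h => hr1 (by linarith)
  have hr2' : r + 2 ≠ 0 := fun h => hr2 (by linarith)
  field_simp
  linear_combination s * hB - (r + 2) * hA

theorem estimates_transform (n : ℕ) (p q r s : ℝ) (hp : 0 < p) (hq : 0 < q)
    (hr1 : r ≠ -1) (hr2 : r ≠ -2)
    (u v : EuclideanSpace ℝ (Fin n) → ℝ)
    (hu : ContDiff ℝ 2 u) (hv : ContDiff ℝ 2 v)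
    (hu0 : ∀ x, 0 < u x) (hv0 : ∀ x, 0 < v x)
    (hue : ∀ x, -lap u x = v x ^ p) (hve : ∀ x, -lap v x = u x ^ q)
    (φ : EuclideanSpace ℝ (Fin n) → ℝ) (hφ : ContDiff ℝ 2 φ)
    (hφc : HasCompactSupport φ) :
    (∫ x, u x ^ r * v x ^ s * ‖gradient u x‖ ^ 2 * φ x)
      - s * (s - 1) / ((r + 1) * (r + 2)) *
        (∫ x, u x ^ (r + 2) * v x ^ (s - 2) * ‖gradient v x‖ ^ 2 * φ x)
    = (1 / (r + 1)) * (∫ x, u x ^ (r + 1) * v x ^ (p + s) * φ x)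
      - s / ((r + 1) * (r + 2)) * (∫ x, u x ^ (r + q + 2) * v x ^ (s - 1) * φ x)
      + (-(1 / (r + 1)) *
          (∫ x, u x ^ (r + 1) * v x ^ s * ⟪gradient u x, gradient φ x⟫_ℝ)
        + s / ((r + 1) * (r + 2)) *
          (∫ x, u x ^ (r + 2) * v x ^ (s - 1) *
            ⟪gradient v x, gradient φ x⟫_ℝ)) :=
  estimates_transform_general n p q r s hr1 hr2 u v hu hv hu0 hv0 hue hve φ hφ hφc
end
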